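/- Exactness of the LP inference formulation for a fully connected ICNN: with ReLU activations, nonnegative inner weight matrices W₁,...,W_{K−1} (and final weights W_{K-1} row nonnegative, output scalar), and fixed input z₀, the feedforward value z_K of the network equals min { ζ_K : ζ_{k+1} ≥ W_k ζ_k + S_k z₀ + b_k for k = 0,...,K−1, ζ_k ≥ 0 for k = 1,...,K−1 }. -/
import Mathlib


open Matrix

/-- Hidden layers of a fully connected ICNN: `z 0 = z₀` and
`z (k+1) = ReLU (W k * z k + S k * z₀ + b k)` componentwise. -/
noncomputable def icnnLayer (d : ℕ → ℕ)
    (W : (k : ℕ) → Matrix (Fin (d (k + 1))) (Fin (d k)) ℝ)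
    (S : (k : ℕ) → Matrix (Fin (d (k + 1))) (Fin (d 0)) ℝ)
    (b : (k : ℕ) → Fin (d (k + 1)) → ℝ)
    (z0 : Fin (d 0) → ℝ) : (k : ℕ) → Fin (d k) → ℝ
  | 0 => z0
  | k + 1 => fun i =>
      max 0 ((W k).mulVec (icnnLayer d W S b z0 k) i + (S k).mulVec z0 i + b k i)

/-- Exactness of the LP inference formulation for a fully connected ICNN with scalar
output `w ⬝ᵥ z_{K-1} + s ⬝ᵥ z₀ + β`: the feedforward value is the minimum of the
epigraph LP relaxation. -/
theorem icnn_lp_inference_exact (d : ℕ → ℕ) (K : ℕ) (hK : 1 ≤ K)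
    (W : (k : ℕ) → Matrix (Fin (d (k + 1))) (Fin (d k)) ℝ)
    (S : (k : ℕ) → Matrix (Fin (d (k + 1))) (Fin (d 0)) ℝ)
    (b : (k : ℕ) → Fin (d (k + 1)) → ℝ)
    (w : Fin (d (K - 1)) → ℝ) (s : Fin (d 0) → ℝ) (β : ℝ)
    (hW0 : W 0 = 0) (hW : ∀ k, 1 ≤ k → ∀ i j, 0 ≤ W k i j) (hw : ∀ i, 0 ≤ w i)
    (z0 : Fin (d 0) → ℝ) :
    IsLeast
      {v : ℝ | ∃ ζ : (k : ℕ) → Fin (d k) → ℝ, ζ 0 = z0 ∧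
        (∀ k, k + 1 ≤ K - 1 → ∀ i,
          (W k).mulVec (ζ k) i + (S k).mulVec z0 i + b k i ≤ ζ (k + 1) i) ∧
        (∀ k, 1 ≤ k → k ≤ K - 1 → ∀ i, 0 ≤ ζ k i) ∧
        w ⬝ᵥ ζ (K - 1) + s ⬝ᵥ z0 + β ≤ v}
      (w ⬝ᵥ icnnLayer d W S b z0 (K - 1) + s ⬝ᵥ z0 + β) := by
  constructor
  · refine ⟨icnnLayer d W S b z0, rfl, ?_, ?_, le_refl _⟩
    · intro k _ i
      exact le_max_right _ _
    · intro k hk _ i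
      cases k with
      | zero => omega
      | succ k => exact le_max_left _ _
  · rintro v ⟨ζ, hζ0, hcons, hnn, hv⟩
    have key : ∀ k, k ≤ K - 1 → ∀ i, icnnLayer d W S b z0 k i ≤ ζ k i := by
      intro k
      induction k with
      | zero => intro _ i; rw [hζ0]; exact le_refl _
      | succ k ih =>
        intro hk i
        have hk' : k ≤ K - 1 := by omega
        have hmv : (W k).mulVec (icnnLayer d W S b z0 k) i ≤ (W k).mulVec (ζ k) i := by
          cases k with
          | zero =>
            simp [hW0]
          | succ m =>
            unfold mulVec dotProduct
            refine Finset.sum_le_sum fun j _ => ?_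
            exact mul_le_mul_of_nonneg_left (ih hk' j) (hW (m+1) (by omega) i j)
        calc icnnLayer d W S b z0 (k+1) i
            = max 0 ((W k).mulVec (icnnLayer d W S b z0 k) i + (S k).mulVec z0 i + b k i) := rfl
          _ ≤ ζ (k+1) i := by
              apply max_le (hnn (k+1) (by omega) hk i)
              exact le_trans (by linarith) (hcons k hk i)
    refine le_trans ?_ hv
    have : w ⬝ᵥ icnnLayer d W S b z0 (K-1) ≤ w ⬝ᵥ ζ (K-1) := by
      unfold dotProduct
      exact Finset.sum_le_sum fun j _ => mul_le_mul_of_nonneg_left (key (K-1) le_rfl j) (hw j)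
    linarith
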